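/- arXiv:2508.16242 — 2 statements merged into one kernel-verified Lean document; each statement's English description precedes it below -/
import Mathlib

section
/- The basis B2(N,A) can be generated from the minimally weakly triggered sets alone: for every nonempty N' ⊆ N weakly triggered by A, the weak output wo(N') is semantically entailed by the set { wo(M) | ∅ ≠ M ⊆ N and A ▶▶ M }; consequently the set { wo(M) | A ▶▶ M } and B2(N,A) entail the same formulas. -/
/-- Formulas of classical propositional logic over countably many atoms. -/
inductive PropForm : Type
  | atom : ℕ → PropForm
  | fls  : PropForm
  | neg  : PropForm → PropForm
  | conj : PropForm → PropForm → PropForm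
  | disj : PropForm → PropForm → PropForm

/-- Truth of a formula under a valuation. -/
def PropForm.eval (v : ℕ → Prop) : PropForm → Prop
  | .atom n => v n
  | .fls => False
  | .neg p => ¬ PropForm.eval v p
  | .conj p q => PropForm.eval v p ∧ PropForm.eval v q
  | .disj p q => PropForm.eval v p ∨ PropForm.eval v q

/-- Semantic consequence `A ⊢ φ`. -/
def Entails (A : Set PropForm) (φ : PropForm) : Prop :=
  ∀ v : ℕ → Prop, (∀ ψ ∈ A, ψ.eval v) → φ.eval v

/-- Propositional satisfiability of a set of formulas. -/
def Satisfiable (A : Set PropForm) : Prop :=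
  ∃ v : ℕ → Prop, ∀ ψ ∈ A, ψ.eval v

/-- Consequence set `Cn(A)`. -/
def Cn (A : Set PropForm) : Set PropForm := {φ | Entails A φ}

/-- A conditional norm `(body, head)`. -/
abbrev IONorm := PropForm × PropForm

/-- Image `N(A)` of a set of formulas under a normative system. -/
def img (N : Set IONorm) (A : Set PropForm) : Set PropForm :=
  {x | ∃ a ∈ A, (a, x) ∈ N}

/-- Heads of the norms of a normative system. -/
def heads (N : Set IONorm) : Set PropForm := {φ | ∃ n ∈ N, φ = n.2}

/-- `A` directly triggers norm `n`: `A ⊢ body(n)`. -/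
def Trig (A : Set PropForm) (n : IONorm) : Prop := Entails A n.1

/-- Simple-minded output `out1(N,A) = Cn(N(Cn(A)))`. -/
def out1 (N : Set IONorm) (A : Set PropForm) : Set PropForm :=
  Cn (img N (Cn A))

/-- A complete set: all of `L`, or maximally consistent. -/
def CompleteSet (V : Set PropForm) : Prop :=
  V = Set.univ ∨ (Satisfiable V ∧ ∀ W, V ⊆ W → Satisfiable W → W = V)

/-- Basic output `out2(N,A)`. -/
def out2 (N : Set IONorm) (A : Set PropForm) : Set PropForm :=
  ⋂ V ∈ {V : Set PropForm | A ⊆ V ∧ CompleteSet V}, Cn (img N V)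

/-- Reusable output `out3(N,A)`. -/
def out3 (N : Set IONorm) (A : Set PropForm) : Set PropForm :=
  ⋂ B ∈ {B : Set PropForm | A ⊆ B ∧ B = Cn B ∧ img N B ⊆ B}, Cn (img N B)

/-- Basic reusable output `out4(N,A)`. -/
def out4 (N : Set IONorm) (A : Set PropForm) : Set PropForm :=
  ⋂ V ∈ {V : Set PropForm | A ⊆ V ∧ img N V ⊆ V ∧ CompleteSet V}, Cn (img N V)

/-- Basis `B1(N,A)` of the simple-minded output. -/
def B1 (N : Set IONorm) (A : Set PropForm) : Set PropForm :=
  {φ | ∃ n ∈ N, Trig A n ∧ φ = n.2}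

/-- Iterated bases `B3^i(N,A)`. -/
def B3i (N : Set IONorm) (A : Set PropForm) : ℕ → Set PropForm
  | 0 => B1 N A
  | i + 1 => B1 N (A ∪ B3i N A i)

/-- `B3(N,A)`: the fixed point `B3^j(N,A)` for the least `j` with
`B3^j(N,A) = B3^{j+1}(N,A)`. -/
noncomputable def B3 (N : Set IONorm) (A : Set PropForm) : Set PropForm :=
  B3i N A (sInf {j | B3i N A j = B3i N A (j + 1)})

/-- Disjunction of the bodies of a finite set of norms. -/
noncomputable def bodyDisj (s : Finset IONorm) : PropForm :=
  (s.toList.map Prod.fst).foldr PropForm.disj PropForm.fls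

/-- Weak output `wo(N')`: disjunction of the heads of a finite set of norms. -/
noncomputable def wo (s : Finset IONorm) : PropForm :=
  (s.toList.map Prod.snd).foldr PropForm.disj PropForm.fls

/-- `A` weakly triggers `N'`: `A ⊢ ⋁_{n ∈ N'} body(n)`. -/
def WTrig (A : Set PropForm) (s : Finset IONorm) : Prop :=
  Entails A (bodyDisj s)

/-- `A` minimally weakly triggers `N'`. -/
def MinWTrig (A : Set PropForm) (s : Finset IONorm) : Prop :=
  WTrig A s ∧ ∀ t : Finset IONorm, t.Nonempty → t ⊂ s → ¬ WTrig A t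

/-- Basis `B2(N,A)` of the basic output. -/
def B2 (N : Finset IONorm) (A : Set PropForm) : Set PropForm :=
  {φ | ∃ s : Finset IONorm, s.Nonempty ∧ s ⊆ N ∧ WTrig A s ∧ φ = wo s}

/-- Materialization `m(N) = {¬a ∨ x | (a,x) ∈ N}`. -/
def mat (N : Set IONorm) : Set PropForm :=
  {φ | ∃ p ∈ N, φ = PropForm.disj (PropForm.neg p.1) p.2}

/-- The throughput norms `I = {(x,x) | x ∈ L}`. -/
def thruI : Set IONorm := {p | p.1 = p.2}

/-- Element-wise negation of the bodies of a finite set of norms. -/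
def negBodies (N : Finset IONorm) : Set PropForm :=
  {φ | ∃ n ∈ N, φ = PropForm.neg n.1}

/-- `C'` is a minimal unsatisfiable subset (MUS) of `C`. -/
def IsMUS (C C' : Set PropForm) : Prop :=
  C' ⊆ C ∧ ¬ Satisfiable C' ∧ ∀ C'' ⊂ C', Satisfiable C''

lemma eval_foldr_disj (v : ℕ → Prop) (l : List PropForm) :
    (l.foldr PropForm.disj PropForm.fls).eval v ↔ ∃ p ∈ l, p.eval v := by
  induction l with
  | nil => simp [PropForm.eval]
  | cons a t ih => simp [PropForm.eval, ih]

lemma eval_wo (v : ℕ → Prop) (s : Finset IONorm) :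
    (wo s).eval v ↔ ∃ n ∈ s, n.2.eval v := by
  rw [wo, eval_foldr_disj]
  constructor
  · rintro ⟨p, hp, hev⟩
    rcases List.mem_map.1 hp with ⟨n, hn, rfl⟩
    exact ⟨n, Finset.mem_toList.1 hn, hev⟩
  · rintro ⟨n, hn, hev⟩
    exact ⟨n.2, List.mem_map.2 ⟨n, Finset.mem_toList.2 hn, rfl⟩, hev⟩

lemma exists_min_wtrig (A : Set PropForm) :
    ∀ s : Finset IONorm, s.Nonempty → WTrig A s →
      ∃ M : Finset IONorm, M.Nonempty ∧ M ⊆ s ∧ MinWTrig A M := by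
  intro s
  induction s using Finset.strongInduction with
  | _ s ih =>
    intro hne hw
    by_cases h : ∀ t : Finset IONorm, t.Nonempty → t ⊂ s → ¬ WTrig A t
    · exact ⟨s, hne, le_refl s, hw, h⟩
    · push_neg at h
      rcases h with ⟨t, htne, hts, htw⟩
      rcases ih t hts htne htw with ⟨M, hMne, hMt, hMmin⟩
      exact ⟨M, hMne, hMt.trans hts.subset, hMmin⟩

/-- The basis `B2(N,A)` can be generated from the minimally weakly
triggered sets alone. -/
theorem B2_from_min_wtrig (N : Finset IONorm) (A : Set PropForm) :
    (∀ N' : Finset IONorm, N'.Nonempty → N' ⊆ N → WTrig A N' →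
      Entails {φ | ∃ M : Finset IONorm, M.Nonempty ∧ M ⊆ N ∧ MinWTrig A M ∧ φ = wo M}
        (wo N')) ∧
    (∀ φ : PropForm,
      Entails {ψ | ∃ M : Finset IONorm, M.Nonempty ∧ M ⊆ N ∧ MinWTrig A M ∧ ψ = wo M} φ ↔
        Entails (B2 N A) φ) := by
  have part1 : ∀ N' : Finset IONorm, N'.Nonempty → N' ⊆ N → WTrig A N' →
      Entails {φ | ∃ M : Finset IONorm, M.Nonempty ∧ M ⊆ N ∧ MinWTrig A M ∧ φ = wo M}
        (wo N') := by
    intro N' hne hNN hw v hv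
    rcases exists_min_wtrig A N' hne hw with ⟨M, hMne, hMN', hMmin⟩
    have hwoM : (wo M).eval v :=
      hv (wo M) ⟨M, hMne, hMN'.trans hNN, hMmin, rfl⟩
    rcases (eval_wo v M).1 hwoM with ⟨n, hn, hev⟩
    exact (eval_wo v N').2 ⟨n, hMN' hn, hev⟩
  refine ⟨part1, fun φ => ⟨?_, ?_⟩⟩
  · intro h v hv
    refine h v ?_
    rintro ψ ⟨M, hMne, hMN, hMmin, rfl⟩
    exact hv (wo M) ⟨M, hMne, hMN, hMmin.1, rfl⟩
  · intro h v hv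
    refine h v ?_
    rintro ψ ⟨s, hsne, hsN, hsw, rfl⟩
    exact part1 s hsne hsN hsw v hv
end

section
/- For the reusable throughput operator: for every finite normative system N and finite input A, a propositional formula φ is in out3+(N,A) := out3(N ∪ I, A), where I = {(x,x) | x ∈ L}, if and only if A ∪ B3(N,A) semantically entails φ. -/
lemma entails_mono {A B : Set PropForm} (h : A ⊆ B) {φ : PropForm}
    (hφ : Entails A φ) : Entails B φ :=
  fun v hv => hφ v (fun ψ hψ => hv ψ (h hψ))

lemma subset_Cn (A : Set PropForm) : A ⊆ Cn A := fun φ hφ v hv => hv φ hφ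

lemma Cn_Cn (A : Set PropForm) : Cn (Cn A) = Cn A := by
  ext φ
  constructor
  · intro h v hv
    exact h v (fun ψ hψ => hψ v hv)
  · intro h
    exact entails_mono (subset_Cn A) h

lemma Cn_mono {A B : Set PropForm} (h : A ⊆ B) : Cn A ⊆ Cn B :=
  fun _ hφ => entails_mono h hφ

lemma img_thruI (B : Set PropForm) : img thruI B = B := by
  ext x
  constructor
  · rintro ⟨a, ha, h⟩
    have : a = x := h
    exact this ▸ ha
  · intro hx
    exact ⟨x, hx, rfl⟩

lemma img_union_left (N M : Set IONorm) (B : Set PropForm) :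
    img (N ∪ M) B = img N B ∪ img M B := by
  ext x
  constructor
  · rintro ⟨a, ha, h | h⟩
    · exact Or.inl ⟨a, ha, h⟩
    · exact Or.inr ⟨a, ha, h⟩
  · rintro (⟨a, ha, h⟩ | ⟨a, ha, h⟩)
    · exact ⟨a, ha, Or.inl h⟩
    · exact ⟨a, ha, Or.inr h⟩

lemma B1_mono (N : Set IONorm) {A A' : Set PropForm} (h : A ⊆ A') :
    B1 N A ⊆ B1 N A' := by
  rintro φ ⟨n, hn, ht, rfl⟩
  exact ⟨n, hn, entails_mono h ht, rfl⟩

lemma B3i_mono (N : Set IONorm) (A : Set PropForm) (i : ℕ) :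
    B3i N A i ⊆ B3i N A (i + 1) := by
  induction i with
  | zero => exact B1_mono N Set.subset_union_left
  | succ i ih =>
    exact B1_mono N (Set.union_subset_union_right A ih)

lemma B1_subset_heads (N : Set IONorm) (A : Set PropForm) :
    B1 N A ⊆ heads N := by
  rintro φ ⟨n, hn, _, rfl⟩
  exact ⟨n, hn, rfl⟩

lemma B3i_subset_heads (N : Set IONorm) (A : Set PropForm) (i : ℕ) :
    B3i N A i ⊆ heads N := by
  cases i with
  | zero => exact B1_subset_heads N A
  | succ i => exact B1_subset_heads N _

lemma heads_finite {N : Set IONorm} (hN : N.Finite) : (heads N).Finite := by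
  have : heads N ⊆ Prod.snd '' N := by
    rintro φ ⟨n, hn, rfl⟩
    exact ⟨n, hn, rfl⟩
  exact (hN.image Prod.snd).subset this

lemma exists_fix (N : Set IONorm) (A : Set PropForm) (hN : N.Finite) :
    ∃ j, B3i N A j = B3i N A (j + 1) := by
  by_contra h
  push_neg at h
  have hH : (heads N).Finite := heads_finite hN
  have key : ∀ k, k ≤ (B3i N A k).ncard := by
    intro k
    induction k with
    | zero => simp
    | succ k ih =>
      have hss : B3i N A k ⊂ B3i N A (k + 1) := ⟨B3i_mono N A k, by
        intro hle
        exact h k (Set.Subset.antisymm (B3i_mono N A k) hle)⟩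
      have hlt := Set.ncard_lt_ncard hss (hH.subset (B3i_subset_heads N A (k + 1)))
      omega
  have h1 := key ((heads N).ncard + 1)
  have h2 := Set.ncard_le_ncard (B3i_subset_heads N A ((heads N).ncard + 1)) hH
  omega

lemma B3_fix (N : Set IONorm) (A : Set PropForm) (hN : N.Finite) :
    B1 N (A ∪ B3 N A) = B3 N A := by
  have hne : {j | B3i N A j = B3i N A (j + 1)}.Nonempty := exists_fix N A hN
  have hmem := Nat.sInf_mem hne
  unfold B3
  exact hmem.symm

/-- For every finite normative system `N` and finite input `A`,
`φ ∈ out3+(N,A) = out3(N ∪ I, A)` iff `A ∪ B3(N,A)` semantically entails `φ`. -/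
theorem out3plus_iff_basis_entails (N : Set IONorm) (A : Set PropForm)
    (hN : N.Finite) (hA : A.Finite) (φ : PropForm) :
    φ ∈ out3 (N ∪ thruI) A ↔ Entails (A ∪ B3 N A) φ := by
  constructor
  · intro h
    -- instantiate with B = Cn (A ∪ B3 N A)
    set B := Cn (A ∪ B3 N A) with hB
    have hAB : A ⊆ B := fun ψ hψ => subset_Cn _ (Or.inl hψ)
    have hBCn : B = Cn B := (Cn_Cn _).symm
    have himgN : img N B ⊆ B3 N A := by
      rintro x ⟨a, ha, hax⟩
      rw [← B3_fix N A hN]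
      exact ⟨(a, x), hax, ha, rfl⟩
    have himg : img (N ∪ thruI) B ⊆ B := by
      rw [img_union_left, img_thruI]
      apply Set.union_subset
      · exact himgN.trans (fun ψ hψ => subset_Cn _ (Or.inr hψ))
      · exact Set.Subset.rfl
    have hφB : φ ∈ Cn (img (N ∪ thruI) B) := by
      simp only [out3, Set.mem_iInter, Set.mem_setOf_eq] at h
      exact h B ⟨hAB, hBCn, himg⟩
    have : φ ∈ Cn B := Cn_mono himg hφB
    rw [hB, Cn_Cn] at this
    exact this
  · intro h
    simp only [out3, Set.mem_iInter, Set.mem_setOf_eq]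
    rintro B ⟨hAB, hBCn, himg⟩
    have hBsub : B ⊆ img (N ∪ thruI) B := by
      intro x hx
      rw [img_union_left, img_thruI]
      exact Or.inr hx
    -- B3 N A ⊆ B
    have hB3i : ∀ i, B3i N A i ⊆ B := by
      intro i
      induction i with
      | zero =>
        rintro ψ ⟨n, hn, ht, rfl⟩
        have hb : n.1 ∈ B := by
          rw [hBCn]
          exact entails_mono hAB ht
        have : n.2 ∈ img (N ∪ thruI) B := ⟨n.1, hb, Or.inl hn⟩
        exact himg this
      | succ i ih =>
        rintro ψ ⟨n, hn, ht, rfl⟩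
        have hb : n.1 ∈ B := by
          rw [hBCn]
          exact entails_mono (Set.union_subset hAB ih) ht
        have : n.2 ∈ img (N ∪ thruI) B := ⟨n.1, hb, Or.inl hn⟩
        exact himg this
    have hB3 : B3 N A ⊆ B := hB3i _
    have : Entails (img (N ∪ thruI) B) φ :=
      entails_mono ((Set.union_subset hAB hB3).trans hBsub) h
    exact this
end
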